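/- Let μ > 0. Then as E → 0⁺, ∫_{−E}^{E} (E² − y²)/(A₁(E,y)·A₂(E,y)) dy = E³/(3μ²) − E⁵/(10μ⁴) + 11·E⁷/(280μ⁶) + O(E⁸). -/

import Mathlib

open Real Filter Asymptotics Topology MeasureTheory

noncomputable def A1 (μ x y : ℝ) : ℝ := Real.sqrt ((x + y)^2 + 4*μ^2)
noncomputable def A2 (μ x y : ℝ) : ℝ := Real.sqrt ((x - y)^2 + 4*μ^2)

/-!
Since `A1 * A2 = 4μ² √(1 + t)` with `t = ((E² - y²)² + 8μ²(E² + y²)) / (16μ⁴) ≤ 2E²/μ²` on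
`|y| ≤ E`, replacing `1/√(1 + t)` by its Taylor polynomial `1 - t/2 + 3t²/8` (error at most
`5t³/16`) changes the integrand by `O(E⁸)` on an interval of length `2E`. The approximate integrand
is an even polynomial in `y`, whose integral over `[-E, E]` is the claimed expansion plus
`E⁹/(168μ⁸) + E¹¹/(3696μ¹⁰)`.
-/

lemma abs_inv_sqrt_one_add_sub_le {u : ℝ} (hu : 0 ≤ u) :
    |(√(1 + u))⁻¹ - (1 - u / 2 + 3 * u ^ 2 / 8)| ≤ 5 / 16 * u ^ 3 := by
  obtain ⟨r, hr, rfl⟩ : ∃ r, 1 ≤ r ∧ u = r ^ 2 - 1 :=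
    ⟨√(1 + u), Real.one_le_sqrt.mpr (by linarith), by rw [Real.sq_sqrt (by linarith)]; ring⟩
  have hr0 : 0 < r := by linarith
  rw [show 1 + (r ^ 2 - 1) = r ^ 2 by ring, Real.sqrt_sq hr0.le, abs_sub_comm, abs_le]
  -- both the error and its gap to `5u³/16` factor through powers of `r - 1`
  have herr : 1 - (r ^ 2 - 1) / 2 + 3 * (r ^ 2 - 1) ^ 2 / 8 - r⁻¹
      = (r - 1) ^ 3 * (3 * r ^ 2 + 9 * r + 8) / (8 * r) := by
    field_simp; ring
  have hgap : 5 / 16 * (r ^ 2 - 1) ^ 3 - (r - 1) ^ 3 * (3 * r ^ 2 + 9 * r + 8) / (8 * r)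
      = (r - 1) ^ 4 * (5 * r ^ 3 + 20 * r ^ 2 + 29 * r + 16) / (16 * r) := by
    field_simp; ring
  have h1 : 0 ≤ (r - 1) ^ 3 * (3 * r ^ 2 + 9 * r + 8) / (8 * r) := by
    have : 0 ≤ r - 1 := by linarith
    positivity
  have h2 : 0 ≤ (r - 1) ^ 4 * (5 * r ^ 3 + 20 * r ^ 2 + 29 * r + 16) / (16 * r) := by
    positivity
  constructor <;> linarith

noncomputable def prodExcess (μ x y : ℝ) : ℝ :=
  ((x ^ 2 - y ^ 2) ^ 2 + 8 * μ ^ 2 * (x ^ 2 + y ^ 2)) / (16 * μ ^ 4)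

lemma prodExcess_nonneg (μ x y : ℝ) : 0 ≤ prodExcess μ x y := by
  unfold prodExcess; positivity

lemma A1_mul_A2 {μ : ℝ} (hμ : μ ≠ 0) (x y : ℝ) :
    A1 μ x y * A2 μ x y = 4 * μ ^ 2 * √(1 + prodExcess μ x y) := by
  rw [A1, A2, ← Real.sqrt_mul (by positivity),
    show ((x + y) ^ 2 + 4 * μ ^ 2) * ((x - y) ^ 2 + 4 * μ ^ 2)
      = (4 * μ ^ 2) ^ 2 * (1 + prodExcess μ x y) by unfold prodExcess; field_simp; ring,
    Real.sqrt_mul (by positivity), Real.sqrt_sq (by positivity)]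

lemma prodExcess_le {μ x y : ℝ} (hμ : 0 < μ) (hxμ : x ≤ μ) (hy : |y| ≤ x) :
    prodExcess μ x y ≤ 2 * x ^ 2 / μ ^ 2 := by
  have hy2 : y ^ 2 ≤ x ^ 2 := sq_le_sq' (abs_le.mp hy).1 (abs_le.mp hy).2
  have hx : 0 ≤ x := (abs_nonneg y).trans hy
  have hx2 : x ^ 2 ≤ μ ^ 2 := pow_le_pow_left₀ hx hxμ 2
  unfold prodExcess
  rw [div_le_div_iff₀ (by positivity) (by positivity)]
  have hdiff : (x ^ 2 - y ^ 2) ^ 2 ≤ x ^ 2 * μ ^ 2 := by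
    nlinarith [sq_nonneg y, mul_le_mul_of_nonneg_left hx2 (sq_nonneg x)]
  have hsum : 8 * μ ^ 2 * (x ^ 2 + y ^ 2) ≤ 16 * μ ^ 2 * x ^ 2 := by nlinarith [sq_nonneg μ]
  nlinarith [sq_nonneg μ, sq_nonneg (x * μ)]

lemma integral_neg_self_sum_mul_pow_two_mul {n : ℕ} (a : Fin n → ℝ) (x : ℝ) :
    ∫ y in (-x)..x, ∑ k, a k * y ^ (2 * (k : ℕ))
      = ∑ k, 2 * a k * x ^ (2 * (k : ℕ) + 1) / (2 * k + 1) := by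
  rw [intervalIntegral.integral_finsetSum fun k _ => by
    apply Continuous.intervalIntegrable; fun_prop]
  refine Finset.sum_congr rfl fun k _ => ?_
  rw [intervalIntegral.integral_const_mul, integral_pow, Odd.neg_pow ⟨k, rfl⟩]
  push_cast
  ring

noncomputable def approxIntegrand (μ x y : ℝ) : ℝ :=
  (x ^ 2 - y ^ 2) / (4 * μ ^ 2) *
    (1 - prodExcess μ x y / 2 + 3 * prodExcess μ x y ^ 2 / 8)

noncomputable def approxIntegrandCoeff (μ x : ℝ) : Fin 6 → ℝ :=
  ![x ^ 2 / (4 * μ ^ 2) - x ^ 4 / (16 * μ ^ 4) + x ^ 6 / (64 * μ ^ 6)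
      + 3 * x ^ 8 / (512 * μ ^ 8) + 3 * x ^ 10 / (8192 * μ ^ 10),
    -1 / (4 * μ ^ 2) + 3 * x ^ 4 / (64 * μ ^ 6) - 3 * x ^ 6 / (256 * μ ^ 8)
      - 15 * x ^ 8 / (8192 * μ ^ 10),
    1 / (16 * μ ^ 4) - 3 * x ^ 2 / (64 * μ ^ 6) + 15 * x ^ 6 / (4096 * μ ^ 10),
    -1 / (64 * μ ^ 6) + 3 * x ^ 2 / (256 * μ ^ 8) - 15 * x ^ 4 / (4096 * μ ^ 10),
    -3 / (512 * μ ^ 8) + 15 * x ^ 2 / (8192 * μ ^ 10),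
    -3 / (8192 * μ ^ 10)]

lemma approxIntegrand_eq_sum {μ : ℝ} (hμ : μ ≠ 0) (x y : ℝ) :
    approxIntegrand μ x y = ∑ k, approxIntegrandCoeff μ x k * y ^ (2 * (k : ℕ)) := by
  simp only [approxIntegrand, prodExcess, approxIntegrandCoeff, Fin.sum_univ_six, Matrix.cons_val,
    Fin.coe_ofNat_eq_mod, Nat.reduceMod]
  field_simp
  ring

lemma integral_approxIntegrand {μ : ℝ} (hμ : μ ≠ 0) (x : ℝ) :
    ∫ y in (-x)..x, approxIntegrand μ x y
      = x ^ 3 / (3 * μ ^ 2) - x ^ 5 / (10 * μ ^ 4) + 11 * x ^ 7 / (280 * μ ^ 6)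
        + (x ^ 9 / (168 * μ ^ 8) + x ^ 11 / (3696 * μ ^ 10)) := by
  simp_rw [approxIntegrand_eq_sum hμ, integral_neg_self_sum_mul_pow_two_mul]
  simp only [approxIntegrandCoeff, Fin.sum_univ_six, Matrix.cons_val, Fin.coe_ofNat_eq_mod,
    Nat.reduceMod]
  push_cast
  field_simp
  ring

lemma abs_integrand_sub_approxIntegrand_le {μ x y : ℝ} (hμ : 0 < μ) (hxμ : x ≤ μ)
    (hy : |y| ≤ x) :
    |(x ^ 2 - y ^ 2) / (A1 μ x y * A2 μ x y) - approxIntegrand μ x y| ≤ 5 / 8 * x ^ 8 / μ ^ 8 := by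
  have hy2 : y ^ 2 ≤ x ^ 2 := sq_le_sq' (abs_le.mp hy).1 (abs_le.mp hy).2
  rw [A1_mul_A2 hμ.ne', approxIntegrand]
  have ht := prodExcess_nonneg μ x y
  set t := prodExcess μ x y
  have hfac : |(x ^ 2 - y ^ 2) / (4 * μ ^ 2)| ≤ x ^ 2 / (4 * μ ^ 2) := by
    rw [abs_of_nonneg (div_nonneg (by linarith) (by positivity))]
    gcongr
    nlinarith [sq_nonneg y]
  have htaylor : |(√(1 + t))⁻¹ - (1 - t / 2 + 3 * t ^ 2 / 8)| ≤ 5 / 16 * (2 * x ^ 2 / μ ^ 2) ^ 3 :=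
    (abs_inv_sqrt_one_add_sub_le ht).trans (by gcongr; exact prodExcess_le hμ hxμ hy)
  calc _ = |(x ^ 2 - y ^ 2) / (4 * μ ^ 2)| * |(√(1 + t))⁻¹ - (1 - t / 2 + 3 * t ^ 2 / 8)| := by
        rw [← abs_mul]
        congr 1
        ring
    _ ≤ x ^ 2 / (4 * μ ^ 2) * (5 / 16 * (2 * x ^ 2 / μ ^ 2) ^ 3) :=
        mul_le_mul hfac htaylor (abs_nonneg _) (by positivity)
    _ = 5 / 8 * x ^ 8 / μ ^ 8 := by field_simp; ring

lemma abs_integral_sub_integral_approxIntegrand_le {μ x : ℝ} (hμ : 0 < μ) (hx : 0 ≤ x)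
    (hxμ : x ≤ μ) :
    |(∫ y in (-x)..x, (x ^ 2 - y ^ 2) / (A1 μ x y * A2 μ x y))
        - ∫ y in (-x)..x, approxIntegrand μ x y| ≤ 5 / 4 * x ^ 9 / μ ^ 8 := by
  have hA : ∀ y, A1 μ x y * A2 μ x y ≠ 0 := fun y => by
    rw [A1_mul_A2 hμ.ne']
    have := prodExcess_nonneg μ x y
    positivity
  have hf : IntervalIntegrable (fun y => (x ^ 2 - y ^ 2) / (A1 μ x y * A2 μ x y)) volume (-x) x :=
    (Continuous.div (by fun_prop) (by unfold A1 A2; fun_prop) hA).intervalIntegrable _ _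
  have hg : IntervalIntegrable (approxIntegrand μ x) volume (-x) x := by
    apply Continuous.intervalIntegrable
    unfold approxIntegrand prodExcess
    fun_prop
  rw [← intervalIntegral.integral_sub hf hg, ← Real.norm_eq_abs]
  calc _ ≤ 5 / 8 * x ^ 8 / μ ^ 8 * |x - -x| :=
        intervalIntegral.norm_integral_le_of_norm_le_const fun y hy => by
          rw [Set.uIoc_of_le (by linarith)] at hy
          exact abs_integrand_sub_approxIntegrand_le hμ hxμ (abs_le.mpr ⟨hy.1.le, hy.2⟩)
    _ = 5 / 4 * x ^ 9 / μ ^ 8 := by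
        rw [abs_of_nonneg (by linarith)]
        ring

lemma abs_integral_sub_expansion_le {μ x : ℝ} (hμ : 0 < μ) (hx : 0 ≤ x) (hxμ : x ≤ μ) :
    |(∫ y in (-x)..x, (x ^ 2 - y ^ 2) / (A1 μ x y * A2 μ x y))
        - (x ^ 3 / (3 * μ ^ 2) - x ^ 5 / (10 * μ ^ 4) + 11 * x ^ 7 / (280 * μ ^ 6))|
      ≤ 2 * x ^ 9 / μ ^ 8 := by
  have herr := abs_integral_sub_integral_approxIntegrand_le hμ hx hxμ
  rw [integral_approxIntegrand hμ.ne'] at herr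
  have hrem : x ^ 11 / (3696 * μ ^ 10) ≤ x ^ 9 / (3696 * μ ^ 8) :=
    calc x ^ 11 / (3696 * μ ^ 10) = x ^ 9 / (3696 * μ ^ 8) * (x / μ) ^ 2 := by
          field_simp
      _ ≤ x ^ 9 / (3696 * μ ^ 8) :=
          mul_le_of_le_one_right (by positivity)
            (pow_le_one₀ (by positivity) ((div_le_one hμ).mpr hxμ))
  calc _ = |(∫ y in (-x)..x, (x ^ 2 - y ^ 2) / (A1 μ x y * A2 μ x y))
          - (x ^ 3 / (3 * μ ^ 2) - x ^ 5 / (10 * μ ^ 4) + 11 * x ^ 7 / (280 * μ ^ 6)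
            + (x ^ 9 / (168 * μ ^ 8) + x ^ 11 / (3696 * μ ^ 10)))
          + (x ^ 9 / (168 * μ ^ 8) + x ^ 11 / (3696 * μ ^ 10))| := by
          congr 1
          ring
    _ ≤ 5 / 4 * x ^ 9 / μ ^ 8 + (x ^ 9 / (168 * μ ^ 8) + x ^ 11 / (3696 * μ ^ 10)) := by
        refine (abs_add_le _ _).trans ?_
        rw [abs_of_nonneg (a := _ + _) (by positivity)]
        gcongr
    _ ≤ 5 / 4 * x ^ 9 / μ ^ 8 + (x ^ 9 / (168 * μ ^ 8) + x ^ 9 / (3696 * μ ^ 8)) := by gcongr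
    _ = (5 / 4 + 1 / 168 + 1 / 3696) * (x ^ 9 / μ ^ 8) := by ring
    _ ≤ 2 * x ^ 9 / μ ^ 8 := by rw [mul_div_assoc]; gcongr; norm_num

theorem stmt14 (μ : ℝ) (hμ : 0 < μ) :
    (fun E => (∫ y in (-E)..E, (E^2 - y^2) / (A1 μ E y * A2 μ E y))
        - (E^3/(3*μ^2) - E^5/(10*μ^4) + 11*E^7/(280*μ^6)))
      =O[𝓝[>] (0:ℝ)] fun E => E^8 := by
  refine (IsBigO.of_bound (2 / μ ^ 8) ?_).trans
    ((isLittleO_pow_pow (by norm_num : 8 < 9)).isBigO.mono nhdsWithin_le_nhds)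
  filter_upwards [Ioc_mem_nhdsGT hμ] with E ⟨hE0, hEμ⟩
  rw [Real.norm_eq_abs, norm_pow, Real.norm_eq_abs, abs_of_pos hE0, ← mul_div_right_comm]
  exact abs_integral_sub_expansion_le hμ hE0.le hEμ
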